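/- For n ≥ 1, there is no homomorphism of conformal algebras ψ : C₂ → C₁ satisfying ψ(v) = v−D, ψ(vξᵢ) = (v−D)ξᵢ and ψ(∂ᵢ) = ∂ᵢ for all i = 1,…,n. In particular, the associative envelopes (C₁,φ₁) and (C₂,φ₂) of Wₙ are not isomorphic as envelopes, and the corresponding representations of Wₙ are inequivalent. -/

import Mathlib

/-! ### Conformal algebras: basic definitions -/

/-- A conformal algebra over a field `k`: a `k`-vector space with a linear map `D`
and a family of bilinear `n`-th products satisfying (C1) locality, (C2) and (C3). -/
structure ConfAlg (k : Type) [Field k] (C : Type) [AddCommGroup C] [Module k C] where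
  Dmap : C →ₗ[k] C
  prod : ℕ → C →ₗ[k] C →ₗ[k] C
  locality : ∀ a b : C, ∃ N : ℕ, ∀ m, N ≤ m → prod m a b = 0
  axC2 : ∀ (m : ℕ) (a b : C), prod m (Dmap a) b = -((m : k)) • prod (m - 1) a b
  axC3 : ∀ (m : ℕ) (a b : C),
    prod m a (Dmap b) = Dmap (prod m a b) + (m : k) • prod (m - 1) a b

section BasicDefs

variable {k : Type} [Field k] {C : Type} [AddCommGroup C] [Module k C]

/-- Left associativity identity for a conformal algebra. -/
def ConfAlg.IsAssoc (A : ConfAlg k C) : Prop :=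
  ∀ (nn m : ℕ) (a b c : C),
    A.prod m (A.prod nn a b) c =
      ∑ s ∈ Finset.range (nn + 1),
        ((-1 : k) ^ s * (nn.choose s : k)) • A.prod (nn - s) a (A.prod (m + s) b c)

/-- A ℤ₂-grading of a conformal algebra: `grade false` is the even part,
`grade true` the odd part. -/
structure ConfGrading (A : ConfAlg k C) where
  grade : Bool → Submodule k C
  inf_bot : grade false ⊓ grade true = ⊥
  sup_top : grade false ⊔ grade true = ⊤
  D_mem : ∀ (i : Bool), ∀ x ∈ grade i, A.Dmap x ∈ grade i
  prod_mem : ∀ (i j : Bool) (m : ℕ) (x y : C), x ∈ grade i → y ∈ grade j →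
    A.prod m x y ∈ grade (xor i j)

/-- The "conjugate" product `{b ∘ₘ a} = ∑_{s ≥ 0} ((-1)^{m+s}/s!) • Dˢ (b ∘_{m+s} a)`,
a finite sum by locality, expressed via `finsum`. -/
noncomputable def cbrR (D : C →ₗ[k] C) (P : ℕ → C →ₗ[k] C →ₗ[k] C)
    (m : ℕ) (b a : C) : C :=
  ∑ᶠ s : ℕ, ((-1 : k) ^ (m + s) * ((Nat.factorial s : k))⁻¹) • (D ^ s) (P (m + s) b a)

/-- The super-commutator `[a ∘ₘ b] = a ∘ₘ b - (-1)^{p(a)p(b)} {b ∘ₘ a}` for homogeneous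
`a, b` of parities `pa, pb` (`false` = even, `true` = odd). -/
noncomputable def sbrR (D : C →ₗ[k] C) (P : ℕ → C →ₗ[k] C →ₗ[k] C)
    (pa pb : Bool) (m : ℕ) (a b : C) : C :=
  P m a b - (if pa && pb then (-1 : k) else 1) • cbrR D P m b a

/-- The defining relations of the Lie conformal superalgebra `Wₙ`, for homogeneous
elements `V` (even), `X i`, `Pd i` (odd) of an associative conformal algebra with
derivation `D` and products `P`. -/
noncomputable def WRelsR (D : C →ₗ[k] C) (P : ℕ → C →ₗ[k] C →ₗ[k] C) {n : ℕ}
    (V : C) (X Pd : Fin n → C) : Prop :=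
  (∀ i j, sbrR D P true true 0 (X i) (X j) = - sbrR D P true true 0 (X j) (X i)) ∧
  (∀ (m : ℕ) (i j), sbrR D P true true m (Pd i) (Pd j) = 0) ∧
  (∀ i j, sbrR D P true true 0 (Pd j) (X i) = if i = j then V else 0) ∧
  (∀ i, sbrR D P false true 0 V (X i) = D (X i)) ∧
  (∀ i, sbrR D P true false 0 (X i) V = D (X i)) ∧
  (∀ i, sbrR D P true false 1 (X i) V = (2 : k) • X i) ∧
  (∀ j, sbrR D P true false 0 (Pd j) V = 0) ∧
  (∀ j, sbrR D P true false 1 (Pd j) V = Pd j) ∧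
  (∀ i j, sbrR D P true true 0 (X i) (X j)
      = ((2 : k))⁻¹ • D (sbrR D P true true 1 (X i) (X j))) ∧
  (sbrR D P false false 0 V V = D V) ∧
  (sbrR D P false false 1 V V = (2 : k) • V) ∧
  (∀ m, 2 ≤ m →
    (∀ i j, sbrR D P true true m (X i) (X j) = 0) ∧
    (∀ j, sbrR D P false true m V (Pd j) = 0) ∧
    (∀ i j, sbrR D P true true m (X i) (Pd j) = 0) ∧
    (∀ i, sbrR D P false true m V (X i) = 0) ∧
    sbrR D P false false m V V = 0)

end BasicDefs
set_option maxSynthPendingDepth 5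

/-! ### The algebra `Aₙ` and the conformal algebra `W = k[D] ⊗ Aₙ[v]` -/

/-- Generators of the algebra `Aₙ`: `xi i` stands for `ξᵢ`, `pa i` for `∂ᵢ`. -/
inductive WGen (n : ℕ) : Type
  | xi : Fin n → WGen n
  | pa : Fin n → WGen n

/-- The defining relations of `Aₙ`:
`ξᵢξⱼ + ξⱼξᵢ = 0`, `∂ᵢ∂ⱼ + ∂ⱼ∂ᵢ = 0`, `∂ᵢξⱼ + ξⱼ∂ᵢ = δᵢⱼ·1`. -/
inductive ARel (k : Type) [Field k] (n : ℕ) :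
    FreeAlgebra k (WGen n) → FreeAlgebra k (WGen n) → Prop
  | xixi (i j : Fin n) : ARel k n
      (FreeAlgebra.ι k (WGen.xi i) * FreeAlgebra.ι k (WGen.xi j)
        + FreeAlgebra.ι k (WGen.xi j) * FreeAlgebra.ι k (WGen.xi i)) 0
  | papa (i j : Fin n) : ARel k n
      (FreeAlgebra.ι k (WGen.pa i) * FreeAlgebra.ι k (WGen.pa j)
        + FreeAlgebra.ι k (WGen.pa j) * FreeAlgebra.ι k (WGen.pa i)) 0
  | paxi (i j : Fin n) : ARel k n
      (FreeAlgebra.ι k (WGen.pa i) * FreeAlgebra.ι k (WGen.xi j)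
        + FreeAlgebra.ι k (WGen.xi j) * FreeAlgebra.ι k (WGen.pa i))
      (if i = j then 1 else 0)

/-- The algebra `Aₙ`. -/
abbrev An (k : Type) [Field k] (n : ℕ) := RingQuot (ARel k n)

/-- `Aₙ[v]`: polynomials over `Aₙ` in the variable `v` (= `Polynomial.X`). -/
abbrev Av (k : Type) [Field k] (n : ℕ) := Polynomial (An k n)

/-- `W = k[D] ⊗ Aₙ[v]`, realized as polynomials in the (outer) variable `D`
with coefficients in `Aₙ[v]`; the element `Dᵗ ⊗ w` is `(monomial t) w`. -/
abbrev Wc (k : Type) [Field k] (n : ℕ) := Polynomial (Av k n)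

/-- The generator `ξᵢ ∈ Aₙ`. -/
noncomputable def xg (k : Type) [Field k] (n : ℕ) (i : Fin n) : An k n :=
  RingQuot.mkAlgHom k (ARel k n) (FreeAlgebra.ι k (WGen.xi i))

/-- The generator `∂ᵢ ∈ Aₙ`. -/
noncomputable def dg (k : Type) [Field k] (n : ℕ) (i : Fin n) : An k n :=
  RingQuot.mkAlgHom k (ARel k n) (FreeAlgebra.ι k (WGen.pa i))

/-- The element `v = 1 ⊗ v ∈ W`. -/
noncomputable def vW (k : Type) [Field k] (n : ℕ) : Wc k n :=
  Polynomial.C Polynomial.X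

/-- The element `ξᵢ = 1 ⊗ ξᵢ ∈ W`. -/
noncomputable def xiW (k : Type) [Field k] (n : ℕ) (i : Fin n) : Wc k n :=
  Polynomial.C (Polynomial.C (xg k n i))

/-- The element `∂ᵢ = 1 ⊗ ∂ᵢ ∈ W`. -/
noncomputable def paW (k : Type) [Field k] (n : ℕ) (i : Fin n) : Wc k n :=
  Polynomial.C (Polynomial.C (dg k n i))

/-- The element `v - D = 1 ⊗ v - D ⊗ 1 ∈ W`. -/
noncomputable def vmD (k : Type) [Field k] (n : ℕ) : Wc k n :=
  (Polynomial.C (Polynomial.X : Av k n) : Wc k n) - (Polynomial.X : Wc k n)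

/-- The map `D` on `W`: multiplication by the outer variable. -/
noncomputable def Dm (k : Type) [Field k] (n : ℕ) : Wc k n →ₗ[k] Wc k n :=
  LinearMap.mulLeft k (Polynomial.X : Wc k n)

/-- The condition characterizing the conformal products of `W`:
`(1 ⊗ f) ∘ₘ (1 ⊗ g) = 1 ⊗ f·(∂ᵐ g/∂vᵐ)` together with axioms (C2) and (C3). -/
def IsWProd (k : Type) [Field k] (n : ℕ)
    (P : ℕ → Wc k n →ₗ[k] Wc k n →ₗ[k] Wc k n) : Prop :=
  (∀ (m : ℕ) (f g : Av k n),
      P m (Polynomial.C f) (Polynomial.C g)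
        = Polynomial.C (f * (fun q => Polynomial.derivative q)^[m] g)) ∧
  (∀ (m : ℕ) (a b : Wc k n), P m (Dm k n a) b = -((m : k)) • P (m - 1) a b) ∧
  (∀ (m : ℕ) (a b : Wc k n),
      P m a (Dm k n b) = Dm k n (P m a b) + (m : k) • P (m - 1) a b)

/-- The locality function `N_W(x,y) = min {N | x ∘ₘ y = 0 for all m ≥ N}`. -/
noncomputable def locNW (k : Type) [Field k] (n : ℕ)
    (P : ℕ → Wc k n →ₗ[k] Wc k n →ₗ[k] Wc k n) (x y : Wc k n) : ℕ :=
  sInf {N : ℕ | ∀ m, N ≤ m → P m x y = 0}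

/-- The smallest `D`-invariant subspace of `W` closed under all the products and
containing a set `S`. -/
noncomputable def confCl (k : Type) [Field k] (n : ℕ)
    (P : ℕ → Wc k n →ₗ[k] Wc k n →ₗ[k] Wc k n) (S : Set (Wc k n)) :
    Submodule k (Wc k n) :=
  sInf {U : Submodule k (Wc k n) | S ⊆ U ∧ (∀ x ∈ U, Dm k n x ∈ U) ∧
    ∀ (m : ℕ), ∀ x ∈ U, ∀ y ∈ U, P m x y ∈ U}

/-- The conformal subalgebra `C₁ ⊆ W`, generated by `v - D`, `(v - D)ξᵢ`, `∂ᵢ`. -/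
noncomputable def C1sub (k : Type) [Field k] (n : ℕ)
    (P : ℕ → Wc k n →ₗ[k] Wc k n →ₗ[k] Wc k n) : Submodule k (Wc k n) :=
  confCl k n P
    ({vmD k n} ∪ Set.range (fun i => vmD k n * xiW k n i) ∪ Set.range (paW k n))

/-- The conformal subalgebra `C₂ ⊆ W`, generated by `v`, `vξᵢ`, `∂ᵢ`. -/
noncomputable def C2sub (k : Type) [Field k] (n : ℕ)
    (P : ℕ → Wc k n →ₗ[k] Wc k n →ₗ[k] Wc k n) : Submodule k (Wc k n) :=
  confCl k n P
    ({vW k n} ∪ Set.range (fun i => vW k n * xiW k n i) ∪ Set.range (paW k n))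

/-!
In `W`, `(v ξᵢ) ∘₁ ∂ᵢ = v ξᵢ · ∂(∂ᵢ)/∂v = 0`, whereas by (C2)
`((v - D) ξᵢ) ∘₁ ∂ᵢ = -(D ξᵢ) ∘₁ ∂ᵢ = ξᵢ ∘₀ ∂ᵢ = ξᵢ ∂ᵢ`.
A homomorphism `ψ` as in the statement would carry the first product to the second,
so `ξᵢ ∂ᵢ = 0` in `Aₙ`. This is impossible: `∂ᵢ ξᵢ + ξᵢ ∂ᵢ = 1` in the nonzero algebra `Aₙ`,
which acts on the exterior algebra `Λ(kⁿ)` with `ξᵢ` wedging with `eᵢ` and `∂ᵢ` contracting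
against the `i`-th coordinate.
-/

lemma mul_ne_zero_of_mul_add_mul_eq_one {R : Type*} [Ring R] [Nontrivial R] {x d : R}
    (h : d * x + x * d = 1) : x * d ≠ 0 := by
  intro hxd
  rw [hxd, add_zero] at h
  have hx : x = 0 := by
    calc x = x * (d * x) := by rw [h, mul_one]
      _ = 0 := by rw [← mul_assoc, hxd, zero_mul]
  simp [hx] at h

section Representation

variable (k : Type) [Field k] (n : ℕ)

open CliffordAlgebra in
noncomputable def exteriorAction : WGen n → Module.End k (ExteriorAlgebra k (Fin n → k))
  | .xi i => LinearMap.mulLeft k (ExteriorAlgebra.ι k (Pi.single i 1))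
  | .pa i => contractLeft (LinearMap.proj i)

open CliffordAlgebra in
noncomputable def An.toEndExterior : An k n →ₐ[k] Module.End k (ExteriorAlgebra k (Fin n → k)) :=
  RingQuot.liftAlgHom k ⟨FreeAlgebra.lift k (exteriorAction k n), by
    rintro _ _ (⟨i, j⟩ | ⟨i, j⟩ | ⟨i, j⟩) <;>
      refine LinearMap.ext fun y => ?_ <;>
      simp only [map_add, map_mul, FreeAlgebra.lift_ι_apply, exteriorAction, map_zero,
        LinearMap.add_apply, Module.End.mul_apply, LinearMap.mulLeft_apply]
    · rw [← mul_assoc, ← mul_assoc, ← add_mul, ExteriorAlgebra.ι, ι_mul_ι_add_swap]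
      simp [QuadraticMap.polar]
    · rw [contractLeft_comm, neg_add_cancel, LinearMap.zero_apply]
    · split_ifs <;> simp [contractLeft_ι_mul, *]⟩

instance An.nontrivial : Nontrivial (An k n) :=
  (An.toEndExterior k n).toRingHom.domain_nontrivial

end Representation

lemma dg_mul_xg_add_xg_mul_dg (k : Type) [Field k] (n : ℕ) (i : Fin n) :
    dg k n i * xg k n i + xg k n i * dg k n i = 1 := by
  simpa [dg, xg] using RingQuot.mkAlgHom_rel k (ARel.paxi (k := k) i i)

lemma xg_mul_dg_ne_zero (k : Type) [Field k] (n : ℕ) (i : Fin n) :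
    xg k n i * dg k n i ≠ 0 :=
  mul_ne_zero_of_mul_add_mul_eq_one (dg_mul_xg_add_xg_mul_dg k n i)

lemma subset_confCl (k : Type) [Field k] (n : ℕ)
    (P : ℕ → Wc k n →ₗ[k] Wc k n →ₗ[k] Wc k n) (S : Set (Wc k n)) :
    S ⊆ confCl k n P S :=
  fun _ hx => Submodule.mem_sInf.mpr fun _ hU => hU.1 hx

lemma vmD_mul_xiW (k : Type) [Field k] (n : ℕ) (i : Fin n) :
    vmD k n * xiW k n i = vW k n * xiW k n i - Dm k n (xiW k n i) := by
  simp only [vmD, vW, Dm, LinearMap.mulLeft_apply, sub_mul]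

namespace IsWProd

variable {k : Type} [Field k] {n : ℕ} {P : ℕ → Wc k n →ₗ[k] Wc k n →ₗ[k] Wc k n}

open Polynomial

lemma prod_zero_C_C (hP : IsWProd k n P) (f g : Av k n) : P 0 (C f) (C g) = C (f * g) :=
  hP.1 0 f g

lemma prod_succ_C_C_C (hP : IsWProd k n P) (m : ℕ) (f : Av k n) (a : An k n) :
    P (m + 1) (C f) (C (C a)) = 0 := by
  rw [hP.1, Function.iterate_succ_apply, derivative_C, iterate_map_zero, mul_zero, map_zero]

lemma prod_one_Dm_left (hP : IsWProd k n P) (a b : Wc k n) : P 1 (Dm k n a) b = -P 0 a b := by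
  simp [hP.2.1]

lemma prod_one_vW_mul_xiW_paW (hP : IsWProd k n P) (i j : Fin n) :
    P 1 (vW k n * xiW k n i) (paW k n j) = 0 := by
  rw [vW, xiW, paW, ← C_mul]
  exact hP.prod_succ_C_C_C 0 _ _

lemma prod_one_vmD_mul_xiW_paW (hP : IsWProd k n P) (i j : Fin n) :
    P 1 (vmD k n * xiW k n i) (paW k n j) = C (C (xg k n i * dg k n j)) := by
  rw [vmD_mul_xiW, map_sub, LinearMap.sub_apply, hP.prod_one_vW_mul_xiW_paW,
    hP.prod_one_Dm_left, xiW, paW, hP.prod_zero_C_C, sub_neg_eq_add, zero_add, ← C_mul]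

end IsWProd

theorem stmt_7_general (k : Type) [Field k] (n : ℕ) (hn : 1 ≤ n)
    (Pr : ℕ → Wc k n →ₗ[k] Wc k n →ₗ[k] Wc k n) (hPr : IsWProd k n Pr) :
    ¬ ∃ ψ : Wc k n →ₗ[k] Wc k n,
        (∀ x ∈ C2sub k n Pr, ψ x ∈ C1sub k n Pr) ∧
        (∀ x ∈ C2sub k n Pr, ψ (Dm k n x) = Dm k n (ψ x)) ∧
        (∀ (m : ℕ), ∀ x ∈ C2sub k n Pr, ∀ y ∈ C2sub k n Pr,
            ψ (Pr m x y) = Pr m (ψ x) (ψ y)) ∧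
        ψ (vW k n) = vmD k n ∧
        (∀ i, ψ (vW k n * xiW k n i) = vmD k n * xiW k n i) ∧
        (∀ i, ψ (paW k n i) = paW k n i) := by
  rintro ⟨ψ, -, -, hprod, -, hvx, hpa⟩
  let i : Fin n := ⟨0, hn⟩
  have hvx_mem : vW k n * xiW k n i ∈ C2sub k n Pr :=
    subset_confCl k n Pr _ (Or.inl (Or.inr ⟨i, rfl⟩))
  have hpa_mem : paW k n i ∈ C2sub k n Pr := subset_confCl k n Pr _ (Or.inr ⟨i, rfl⟩)
  have key := hprod 1 _ hvx_mem _ hpa_mem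
  rw [hPr.prod_one_vW_mul_xiW_paW, map_zero, hvx, hpa, hPr.prod_one_vmD_mul_xiW_paW] at key
  rw [eq_comm, Polynomial.C_eq_zero, Polynomial.C_eq_zero] at key
  exact xg_mul_dg_ne_zero k n i key

/-- there is no homomorphism of conformal algebras `ψ : C₂ → C₁` with
`ψ(v) = v - D`, `ψ(vξᵢ) = (v - D)ξᵢ` and `ψ(∂ᵢ) = ∂ᵢ`; hence the associative
envelopes `(C₁, φ₁)` and `(C₂, φ₂)` of `Wₙ` are not isomorphic. -/
theorem stmt_7 (k : Type) [Field k] [CharZero k] (n : ℕ) (hn : 1 ≤ n)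
    (Pr : ℕ → Wc k n →ₗ[k] Wc k n →ₗ[k] Wc k n) (hPr : IsWProd k n Pr) :
    ¬ ∃ ψ : Wc k n →ₗ[k] Wc k n,
        (∀ x ∈ C2sub k n Pr, ψ x ∈ C1sub k n Pr) ∧
        (∀ x ∈ C2sub k n Pr, ψ (Dm k n x) = Dm k n (ψ x)) ∧
        (∀ (m : ℕ), ∀ x ∈ C2sub k n Pr, ∀ y ∈ C2sub k n Pr,
            ψ (Pr m x y) = Pr m (ψ x) (ψ y)) ∧
        ψ (vW k n) = vmD k n ∧
        (∀ i, ψ (vW k n * xiW k n i) = vmD k n * xiW k n i) ∧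
        (∀ i, ψ (paW k n i) = paW k n i) :=
  stmt_7_general k n hn Pr hPr
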